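/- arXiv:1501.05830 — 2 statements merged into one kernel-verified Lean document; each statement's English description precedes it below -/
import Mathlib

section
/- For all n ≥ 0, D_n(q) = Σ_{l=0}^{⌊(n−1)/2⌋} qbinom(n−l−1, l) · q^{l²}. -/
open Finset PowerSeries

variable {R : Type*} [CommRing R]

/-- The Gaussian (q-)binomial coefficient, via the Pascal-type recurrence
`[n+1, k+1] = q^(n-k) [n, k] + [n, k+1]`. -/
def qbinom (q : R) : ℕ → ℕ → R
  | _, 0 => 1
  | 0, _ + 1 => 0
  | n + 1, k + 1 => qbinom q n k * q ^ (n - k) + qbinom q n (k + 1)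

/-- The q-biperiodic Fibonacci sequence. -/
def biF (a b q : R) : ℕ → R
  | 0 => 0
  | 1 => 1
  | n + 2 => (if (n + 2) % 2 = 0 then a else b) * biF a b q (n + 1) + q ^ n * biF a b q n

/-- The auxiliary q-biperiodic Fibonacci sequence (same recurrence, initial values 1, 0). -/
def biFhat (a b q : R) : ℕ → R
  | 0 => 1
  | 1 => 0
  | n + 2 => (if (n + 2) % 2 = 0 then a else b) * biFhat a b q (n + 1) + q ^ n * biFhat a b q n

/-- The biperiodic Fibonacci sequence. -/
def biT (a b : ℕ) : ℕ → ℕ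
  | 0 => 0
  | 1 => 1
  | n + 2 => (if (n + 2) % 2 = 0 then a else b) * biT a b (n + 1) + biT a b n

/-- The Schur polynomials D_n(q). -/
def schurD (q : R) : ℕ → R
  | 0 => 0
  | 1 => 1
  | n + 2 => schurD q (n + 1) + q ^ n * schurD q n

/-- The auxiliary Schur polynomials with initial values 1, 0. -/
def schurDhat (q : R) : ℕ → R
  | 0 => 1
  | 1 => 0
  | n + 2 => schurDhat q (n + 1) + q ^ n * schurDhat q n

/-- The shifted q-biperiodic Fibonacci sequence F^(s)_n(q). -/
def biFs (a b q : R) (s : ℕ) : ℕ → R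
  | 0 => 0
  | 1 => 1
  | n + 2 =>
      (if (n + 2) % 2 = 0 then a ^ ((s + 1) % 2) * b ^ (1 - (s + 1) % 2)
       else a ^ (1 - (s + 1) % 2) * b ^ ((s + 1) % 2)) * biFs a b q s (n + 1)
        + q ^ (n + s) * biFs a b q s n

lemma qbinom_succ_succ (q : R) (m k : ℕ) :
    qbinom q (m + 1) (k + 1) = qbinom q m k * q ^ (m - k) + qbinom q m (k + 1) := rfl

lemma qbinom_eq_zero (q : R) (n k : ℕ) (h : n < k) : qbinom q n k = 0 := by
  induction n generalizing k with
  | zero =>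
    cases k with
    | zero => omega
    | succ k => rfl
  | succ n ih =>
    cases k with
    | zero => omega
    | succ k =>
      rw [qbinom_succ_succ, ih k (by omega), ih (k + 1) (by omega)]
      ring

theorem stmt6 (q : R) (n : ℕ) :
    schurD q n = ∑ l ∈ Finset.range ((n + 1) / 2), qbinom q (n - l - 1) l * q ^ (l ^ 2) := by
  induction n using Nat.twoStepInduction with
  | zero => simp [schurD]
  | one => simp [schurD, qbinom]
  | more n ih1 ih2 =>
    have hD : schurD q (n + 2) = schurD q (n + 1) + q ^ n * schurD q n := rfl
    rw [hD, ih1, ih2]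
    have h3 : (n + 2 + 1) / 2 = (n + 1) / 2 + 1 := by omega
    rw [h3, Finset.sum_range_succ']
    have hstep : ∀ i ∈ Finset.range ((n + 1) / 2),
        qbinom q (n + 2 - (i + 1) - 1) (i + 1) * q ^ ((i + 1) ^ 2)
          = qbinom q (n - i - 1) (i + 1) * q ^ ((i + 1) ^ 2)
            + q ^ n * (qbinom q (n - i - 1) i * q ^ (i ^ 2)) := by
      intro i hi
      rw [Finset.mem_range] at hi
      have hin : i < n := by omega
      have h4 : n + 2 - (i + 1) - 1 = (n - i - 1) + 1 := by omega
      rw [h4, qbinom_succ_succ]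
      by_cases hc : 2 * i + 1 ≤ n
      · have h5 : n - i - 1 - i + (i + 1) ^ 2 = n + i ^ 2 := by ring_nf; omega
        rw [add_mul, mul_assoc, ← pow_add, h5, pow_add]
        ring
      · have hn2i : n = 2 * i := by omega
        have hz : qbinom q (n - i - 1) i = 0 := qbinom_eq_zero q _ _ (by omega)
        rw [hz]
        ring
    rw [Finset.sum_congr rfl hstep, Finset.sum_add_distrib, ← Finset.mul_sum]
    have hmain : ∑ i ∈ Finset.range ((n + 1) / 2),
        qbinom q (n - i - 1) (i + 1) * q ^ ((i + 1) ^ 2)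
          = ∑ i ∈ Finset.range (n / 2), qbinom q (n - i - 1) (i + 1) * q ^ ((i + 1) ^ 2) := by
      rcases Nat.even_or_odd n with ⟨m, hm⟩ | ⟨m, hm⟩
      · have : (n + 1) / 2 = n / 2 := by omega
        rw [this]
      · have : (n + 1) / 2 = n / 2 + 1 := by omega
        rw [this, Finset.sum_range_succ]
        have hz : qbinom q (n - n / 2 - 1) (n / 2 + 1) = 0 :=
          qbinom_eq_zero q _ _ (by omega)
        rw [hz, zero_mul, add_zero]
    rw [hmain]
    have h6 : (n + 1 + 1) / 2 = n / 2 + 1 := by omega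
    rw [h6, Finset.sum_range_succ']
    have h7 : ∀ i ∈ Finset.range (n / 2),
        qbinom q (n + 1 - (i + 1) - 1) (i + 1) * q ^ ((i + 1) ^ 2)
          = qbinom q (n - i - 1) (i + 1) * q ^ ((i + 1) ^ 2) := by
      intro i _
      congr 2
      omega
    rw [Finset.sum_congr rfl h7]
    have h8 : ∀ j : ℕ, qbinom q j 0 = 1 := fun j => by cases j <;> rfl
    rw [h8, h8]
    ring
end

section
/- Weight each tiling of a board by squares and dominoes by a^{(number of squares in odd positions)} · b^{(number of squares in even positions)} · q^{(sum over dominoes of the left position i)}. Then the total weight over all tilings of an m-board using exactly n tiles of which k are dominoes (so m = n+k cells) equals a^{ξ(n+k)} · q^{k²} · qbinom(n, k) · (ab)^{⌊(n−k)/2⌋}. -/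
open Finset PowerSeries

variable {R : Type*} [CommRing R]

/-- The weight of a tiling (list of tiles, `false` = square, `true` = domino),
where `pos` is the (1-indexed) cell position at which the next tile starts:
a square in an odd position weighs `a`, in an even position `b`, and a domino
covering cells `(i, i+1)` weighs `q ^ i`. -/
def tileWeight (a b q : R) : ℕ → List Bool → R
  | _, [] => 1
  | pos, false :: rest => (if pos % 2 = 1 then a else b) * tileWeight a b q (pos + 1) rest
  | pos, true :: rest => q ^ pos * tileWeight a b q (pos + 2) rest

lemma qbinom_k0 (q : R) (n : ℕ) : qbinom q n 0 = 1 := by cases n <;> rfl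

lemma qbinom_zero_of_lt (q : R) : ∀ n k : ℕ, n < k → qbinom q n k = 0
  | 0, k+1, _ => rfl
  | n+1, k+1, h => by
      rw [show qbinom q (n+1) (k+1) = qbinom q n k * q ^ (n-k) + qbinom q n (k+1) from rfl,
        qbinom_zero_of_lt q n k (by omega), qbinom_zero_of_lt q n (k+1) (by omega)]
      ring

lemma qbinom_self (q : R) : ∀ n : ℕ, qbinom q n n = 1
  | 0 => rfl
  | n+1 => by
      rw [show qbinom q (n+1) (n+1) = qbinom q n n * q ^ (n-n) + qbinom q n (n+1) from rfl,
        qbinom_self q n, qbinom_zero_of_lt q n (n+1) (by omega), Nat.sub_self, pow_zero]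
      ring

lemma qbinom_pascal (q : R) :
    ∀ n k : ℕ, qbinom q (n+1) (k+1) = qbinom q n k + q^(k+1) * qbinom q n (k+1)
  | 0, 0 => by simp [qbinom]
  | 0, k+1 => by simp [qbinom]
  | n+1, 0 => by
      have h1 := qbinom_pascal q n 0
      have e0 : qbinom q (n+2) 1 = qbinom q (n+1) 0 * q ^ (n+1) + qbinom q (n+1) 1 := rfl
      have e1 : qbinom q (n+1) 1 = qbinom q n 0 * q ^ n + qbinom q n 1 := rfl
      rw [qbinom_k0] at e0 e1
      rw [qbinom_k0] at h1 ⊢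
      linear_combination e0 + h1 - q * e1
  | n+1, k+1 => by
      have h1 := qbinom_pascal q n k
      have h2 := qbinom_pascal q n (k+1)
      have e0 : qbinom q (n+2) (k+2)
          = qbinom q (n+1) (k+1) * q ^ (n+1-(k+1)) + qbinom q (n+1) (k+2) := rfl
      have e1 : qbinom q (n+1) (k+1) = qbinom q n k * q ^ (n-k) + qbinom q n (k+1) := rfl
      have e2 : qbinom q (n+1) (k+2) = qbinom q n (k+1) * q ^ (n-(k+1)) + qbinom q n (k+2) := rfl
      rw [Nat.succ_sub_succ] at e0
      rcases lt_or_ge k n with h | h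
      · have hd : n - k = (n - (k+1)) + 1 := by omega
        rw [hd, pow_succ] at e0 e1
        linear_combination e0 + (q^(n-(k+1)) * q) * h1 + h2 - e1 - q^(k+2) * e2
      · rcases eq_or_lt_of_le h with rfl | h'
        · rw [qbinom_self q, qbinom_self q, qbinom_zero_of_lt q (n+1) (n+1+1) (by omega)]
          ring
        · rw [qbinom_zero_of_lt q (n+2) (k+2) (by omega),
            qbinom_zero_of_lt q (n+1) (k+1) (by omega),
            qbinom_zero_of_lt q (n+1) (k+2) (by omega)]
          ring

lemma tileWeight_shift (q : R) : ∀ (l : List Bool) (a b : R) (p : ℕ),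
    tileWeight a b q (p+1) l = q ^ l.count true * tileWeight b a q p l
  | [], a, b, p => by simp [tileWeight]
  | false :: rest, a, b, p => by
      rw [show tileWeight a b q (p+1) (false :: rest)
            = (if (p+1) % 2 = 1 then a else b) * tileWeight a b q (p+2) rest from rfl,
        show tileWeight b a q p (false :: rest)
            = (if p % 2 = 1 then b else a) * tileWeight b a q (p+1) rest from rfl,
        tileWeight_shift q rest a b (p+1)]
      have hc : (false :: rest).count true = rest.count true := by simp
      rw [hc]
      by_cases hp : p % 2 = 1
      · rw [if_pos hp, if_neg (by omega)]; ring
      · rw [if_neg hp, if_pos (by omega)]; ring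
  | true :: rest, a, b, p => by
      rw [show tileWeight a b q (p+1) (true :: rest)
            = q ^ (p+1) * tileWeight a b q (p+3) rest from rfl,
        show tileWeight b a q p (true :: rest)
            = q ^ p * tileWeight b a q (p+2) rest from rfl,
        tileWeight_shift q rest a b (p+2)]
      have hc : (true :: rest).count true = rest.count true + 1 := by simp
      rw [hc, pow_succ, pow_succ]; ring

def vconsEquiv (α : Type*) (n : ℕ) : α × List.Vector α n ≃ List.Vector α (n+1) where
  toFun p := p.1 ::ᵥ p.2
  invFun v := (v.head, v.tail)
  left_inv p := by simp
  right_inv v := by simp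

lemma vec_sum_cons {n : ℕ} (g : List.Vector Bool (n+1) → R) :
    ∑ v : List.Vector Bool (n+1), g v
      = ∑ v : List.Vector Bool n, (g (false ::ᵥ v) + g (true ::ᵥ v)) := by
  rw [← Fintype.sum_equiv (vconsEquiv Bool n) (fun p => g (p.1 ::ᵥ p.2)) _ (fun p => rfl)]
  rw [Fintype.sum_prod_type_right]
  simp [Fintype.sum_bool]
  try exact Finset.sum_congr rfl fun v _ => add_comm _ _

def gsum (a b q : R) (n k : ℕ) : R :=
  ∑ v ∈ Finset.univ.filter (fun v : List.Vector Bool n => v.toList.count true = k),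
      tileWeight a b q 1 v.toList

lemma gsum_eq (a b q : R) (n k : ℕ) :
    gsum a b q n k = ∑ v : List.Vector Bool n,
      (if v.toList.count true = k then tileWeight a b q 1 v.toList else 0) := by
  rw [gsum, Finset.sum_filter]

lemma gsum_zero (a b q : R) (k : ℕ) :
    gsum a b q 0 k = if 0 = k then 1 else 0 := by
  rw [gsum_eq]
  have h : ∀ v : List.Vector Bool 0, v.toList = [] :=
    fun v => List.length_eq_zero_iff.mp v.2
  rw [Finset.sum_congr rfl (fun v _ => by rw [h v])]
  rw [Finset.sum_const, Finset.card_univ]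
  simp [tileWeight]
  exact if_congr Iff.rfl rfl rfl

lemma gsum_succ_zero (a b q : R) (n : ℕ) :
    gsum a b q (n+1) 0 = a * gsum b a q n 0 := by
  rw [gsum_eq, vec_sum_cons, gsum_eq, Finset.mul_sum]
  apply Finset.sum_congr rfl
  intro v _
  have hcf : (false :: v.toList).count true = v.toList.count true := by simp [List.count_cons]
  have hct : (true :: v.toList).count true = v.toList.count true + 1 := by simp [List.count_cons]
  simp only [List.Vector.toList_cons]
  rw [hcf, hct,
    show tileWeight a b q 1 (false :: v.toList)
        = a * tileWeight a b q 2 v.toList from rfl,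
    show tileWeight a b q 1 (true :: v.toList)
        = q ^ 1 * tileWeight a b q 3 v.toList from rfl,
    tileWeight_shift q v.toList a b 1]
  rw [if_neg (by omega : ¬ (List.count true v.toList + 1 = 0))]
  split_ifs with h1
  · rw [h1]; ring
  · ring

lemma gsum_succ_pos (a b q : R) (n k : ℕ) :
    gsum a b q (n+1) (k+1)
      = a * q ^ (k+1) * gsum b a q n (k+1) + q ^ (2*k+1) * gsum a b q n k := by
  rw [gsum_eq, vec_sum_cons, gsum_eq, gsum_eq, Finset.mul_sum, Finset.mul_sum,
    ← Finset.sum_add_distrib]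
  apply Finset.sum_congr rfl
  intro v _
  have hcf : (false :: v.toList).count true = v.toList.count true := by simp [List.count_cons]
  have hct : (true :: v.toList).count true = v.toList.count true + 1 := by simp [List.count_cons]
  simp only [List.Vector.toList_cons]
  have s2 : tileWeight a b q 2 v.toList
      = q ^ (v.toList.count true) * tileWeight b a q 1 v.toList :=
    tileWeight_shift q v.toList a b 1
  have s3 : tileWeight a b q 3 v.toList
      = q ^ (v.toList.count true) * tileWeight b a q 2 v.toList :=
    tileWeight_shift q v.toList a b 2
  have s2' : tileWeight b a q 2 v.toList
      = q ^ (v.toList.count true) * tileWeight a b q 1 v.toList :=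
    tileWeight_shift q v.toList b a 1
  rw [hcf, hct,
    show tileWeight a b q 1 (false :: v.toList)
        = a * tileWeight a b q 2 v.toList from rfl,
    show tileWeight a b q 1 (true :: v.toList)
        = q ^ 1 * tileWeight a b q 3 v.toList from rfl,
    s2, s3, s2']
  split_ifs with h1 h2 h3 <;>
    first
    | (exfalso; omega)
    | ((try rw [h1]); (try rw [show List.count true v.toList = k from by omega]); ring)

lemma gsum_closed (q : R) : ∀ (n : ℕ) (a b : R) (k : ℕ),
    gsum a b q n k = a ^ ((n + k) % 2) * q ^ (k ^ 2) * qbinom q n k * (a * b) ^ ((n - k) / 2)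
  | 0, a, b, 0 => by rw [gsum_zero]; simp [qbinom]
  | 0, a, b, k+1 => by rw [gsum_zero]; simp [qbinom]
  | n+1, a, b, 0 => by
      rw [gsum_succ_zero, gsum_closed q n b a 0, qbinom_k0, qbinom_k0]
      rcases Nat.even_or_odd n with ⟨m, hm⟩ | ⟨m, hm⟩
      · rw [show (n+0) % 2 = 0 from by omega, show (n+1+0) % 2 = 1 from by omega,
          show (n-0)/2 = m from by omega, show (n+1-0)/2 = m from by omega]
        ring
      · rw [show (n+0) % 2 = 1 from by omega, show (n+1+0) % 2 = 0 from by omega,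
          show (n-0)/2 = m from by omega, show (n+1-0)/2 = m+1 from by omega]
        ring
  | n+1, a, b, k+1 => by
      rw [gsum_succ_pos, gsum_closed q n b a (k+1), gsum_closed q n a b k, qbinom_pascal]
      rw [show (n+1+(k+1)) % 2 = (n+k) % 2 from by omega,
        show (n+1-(k+1))/2 = (n-k)/2 from by omega]
      rcases le_or_gt (k+1) n with h | h
      · rcases Nat.even_or_odd (n - (k+1)) with ⟨m, hm⟩ | ⟨m, hm⟩
        · rw [show (n+(k+1)) % 2 = 0 from by omega, show (n-(k+1))/2 = m from by omega,
            show (n+k) % 2 = 1 from by omega, show (n-k)/2 = m from by omega]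
          ring
        · rw [show (n+(k+1)) % 2 = 1 from by omega, show (n-(k+1))/2 = m from by omega,
            show (n+k) % 2 = 0 from by omega, show (n-k)/2 = m+1 from by omega]
          ring
      · rw [qbinom_zero_of_lt q n (k+1) h]
        ring

theorem stmt19 (a b q : R) (n k : ℕ) :
    ∑ v ∈ Finset.univ.filter (fun v : List.Vector Bool n => v.toList.count true = k),
        tileWeight a b q 1 v.toList =
      a ^ ((n + k) % 2) * q ^ (k ^ 2) * qbinom q n k * (a * b) ^ ((n - k) / 2) := by
  exact gsum_closed q n a b k
end
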